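/- arXiv:1106.0309 — 2 statements merged into one kernel-verified Lean document; each statement's English description precedes it below -/
import Mathlib

section
/- For every real number p with 1 ≤ p < ∞, there exists an infinite-dimensional closed ℝ-linear subspace Y of the Banach space L^p([0,1]) (with Lebesgue measure) such that for every g ∈ Y with g ≠ 0 and every real q with p < q < ∞, g does not belong to ℒ^q([0,1]), i.e. ¬ MemLp g q μ. In other words, L^p[0,1] \ ⋃_{q>p} L^q[0,1] is spaceable. -/
/-!
Put on the dyadic intervals `(2^-(j+1), 2^-j]` with `j = Nat.pair n k` the step function `f n`
taking the value `2^((j+1-k)/p)` there. Since `j ≥ k²`, the `k`-th piece contributes `2^-k` to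
`∫ |f n|^p` but `2^((q/p-1)(j+1) - kq/p) ≥ 1` (for large `k`) to `∫ |f n|^q` when `q > p`.

The `f n` have disjoint supports `U n`. Restriction to `U n` is continuous on `L^p` and kills
`f m` for `m ≠ n`, so it maps the closed span `Y` of the `f n` into the line through `f n`;
restriction to the complement of `⋃ n, U n` kills `Y`. Hence a nonzero `g ∈ Y` is a nonzero
multiple of some `f n` on `U n`, and `g ∈ L^q` would force `f n ∈ L^q`.
-/

open MeasureTheory Set Function
open scoped ENNReal

theorem ContinuousLinearMap.mem_of_mem_topologicalClosure_span {R M N ι : Type*} [Semiring R]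
    [TopologicalSpace M] [AddCommMonoid M] [Module R M] [ContinuousAdd M]
    [ContinuousConstSMul R M] [TopologicalSpace N] [AddCommMonoid N] [Module R N]
    (T : M →L[R] N) {K : Submodule R N} (hK : IsClosed (K : Set N)) {v : ι → M}
    (hv : ∀ i, T (v i) ∈ K) {g : M} (hg : g ∈ (Submodule.span R (range v)).topologicalClosure) :
    T g ∈ K := by
  have hspan : Submodule.span R (range v) ≤ K.comap (T : M →ₗ[R] N) :=
    Submodule.span_le.2 (range_subset_iff.2 hv)
  exact Submodule.topologicalClosure_minimal _ hspan (hK.preimage T.continuous) hg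

theorem Submodule.not_finite_of_linearIndependent {R M ι : Type*} [Ring R] [StrongRankCondition R]
    [AddCommGroup M] [Module R M] [Infinite ι] {v : ι → M} (hv : LinearIndependent R v)
    {Y : Submodule R M} (hvY : ∀ i, v i ∈ Y) : ¬ Module.Finite R Y := by
  intro _
  exact Module.Finite.not_linearIndependent_of_infinite (fun i => (⟨v i, hvY i⟩ : Y))
    (LinearIndependent.of_comp Y.subtype hv)

namespace MeasureTheory

variable {α E 𝕜 : Type*} [MeasurableSpace α] {μ : Measure α} {p : ℝ≥0∞} [Fact (1 ≤ p)]
  [NormedAddCommGroup E] [NontriviallyNormedField 𝕜] [NormedSpace 𝕜 E]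

local notation "R" s => LpToLpRestrictCLM α E 𝕜 μ p s

theorem LpToLpRestrictCLM_eq_iff {s : Set α} {g h : Lp E p μ} :
    (R s) g = (R s) h ↔ g =ᵐ[μ.restrict s] h := by
  rw [Lp.ext_iff]
  constructor <;> intro H
  · exact (LpToLpRestrictCLM_coeFn 𝕜 s g).symm.trans (H.trans (LpToLpRestrictCLM_coeFn 𝕜 s h))
  · exact (LpToLpRestrictCLM_coeFn 𝕜 s g).trans (H.trans (LpToLpRestrictCLM_coeFn 𝕜 s h).symm)

theorem LpToLpRestrictCLM_eq_zero_iff {s : Set α} {g : Lp E p μ} :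
    (R s) g = 0 ↔ g =ᵐ[μ.restrict s] 0 := by
  have h0 : ⇑(0 : Lp E p μ) =ᵐ[μ.restrict s] 0 := ae_restrict_of_ae (Lp.coeFn_zero E p μ)
  rw [← map_zero (R s), LpToLpRestrictCLM_eq_iff]
  exact ⟨fun h => h.trans h0, fun h => h.trans h0.symm⟩

section DisjointSupports

variable {U : ℕ → Set α} {f : ℕ → Lp E p μ}

theorem LpToLpRestrictCLM_eq_zero_of_disjoint (hU : Pairwise (Disjoint on U))
    (hf : ∀ n, f n =ᵐ[μ.restrict (U n)ᶜ] 0) {m n : ℕ} (hmn : m ≠ n) :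
    (R (U n)) (f m) = 0 :=
  LpToLpRestrictCLM_eq_zero_iff.2 <|
    ae_restrict_of_ae_restrict_of_subset (hU hmn).subset_compl_left (hf m)

theorem LpToLpRestrictCLM_compl_iUnion_eq_zero (hf : ∀ n, f n =ᵐ[μ.restrict (U n)ᶜ] 0) (m : ℕ) :
    (R (⋃ n, U n)ᶜ) (f m) = 0 :=
  LpToLpRestrictCLM_eq_zero_iff.2 <|
    ae_restrict_of_ae_restrict_of_subset (compl_subset_compl.2 (subset_iUnion U m)) (hf m)

theorem linearIndependent_of_disjoint_supports (hU : Pairwise (Disjoint on U))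
    (hf : ∀ n, f n =ᵐ[μ.restrict (U n)ᶜ] 0) (hf0 : ∀ n, f n ≠ 0) : LinearIndependent 𝕜 f := by
  rw [linearIndependent_iff']
  intro t a hsum i hi
  have hRi : (R (U i)) (f i) ≠ 0 := fun h =>
    hf0 i <| (Lp.eq_zero_iff_ae_eq_zero).2 <|
      ae_of_ae_restrict_of_ae_restrict_compl (U i) (LpToLpRestrictCLM_eq_zero_iff.1 h) (hf i)
  have hsum_i := congrArg (R (U i)) hsum
  rw [map_sum, map_zero, Finset.sum_eq_single_of_mem i hi fun j _ hji => by
    rw [map_smul, LpToLpRestrictCLM_eq_zero_of_disjoint hU hf hji, smul_zero], map_smul] at hsum_i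
  exact (smul_eq_zero.1 hsum_i).resolve_right hRi

variable [CompleteSpace 𝕜]

theorem exists_ae_eq_smul_of_mem_closure_span (hU : Pairwise (Disjoint on U))
    (hf : ∀ n, f n =ᵐ[μ.restrict (U n)ᶜ] 0) {g : Lp E p μ}
    (hg : g ∈ (Submodule.span 𝕜 (range f)).topologicalClosure) (n : ℕ) :
    ∃ c : 𝕜, g =ᵐ[μ.restrict (U n)] c • f n := by
  have hRg : (R (U n)) g ∈ 𝕜 ∙ (R (U n)) (f n) := by
    refine (R (U n)).mem_of_mem_topologicalClosure_span
      (Submodule.closed_of_finiteDimensional _) (fun m => ?_) hg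
    rcases eq_or_ne m n with rfl | hmn
    · exact Submodule.mem_span_singleton_self _
    · rw [LpToLpRestrictCLM_eq_zero_of_disjoint hU hf hmn]
      exact Submodule.zero_mem _
  obtain ⟨c, hc⟩ := Submodule.mem_span_singleton.1 hRg
  rw [← map_smul, LpToLpRestrictCLM_eq_iff] at hc
  exact ⟨c, hc.symm.trans (ae_restrict_of_ae (Lp.coeFn_smul c (f n)))⟩

theorem ae_eq_zero_on_compl_iUnion_of_mem_closure_span
    (hf : ∀ n, f n =ᵐ[μ.restrict (U n)ᶜ] 0) {g : Lp E p μ}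
    (hg : g ∈ (Submodule.span 𝕜 (range f)).topologicalClosure) :
    g =ᵐ[μ.restrict (⋃ n, U n)ᶜ] 0 := by
  refine LpToLpRestrictCLM_eq_zero_iff.1 <| Submodule.mem_bot 𝕜 |>.1 <|
    (R (⋃ n, U n)ᶜ).mem_of_mem_topologicalClosure_span
      (Submodule.closed_of_finiteDimensional ⊥) (fun m => ?_) hg
  rw [LpToLpRestrictCLM_compl_iUnion_eq_zero hf m]
  exact Submodule.zero_mem _

theorem exists_memLp_of_memLp_of_mem_closure_span (hUm : ∀ n, MeasurableSet (U n))
    (hU : Pairwise (Disjoint on U)) (hf : ∀ n, f n =ᵐ[μ.restrict (U n)ᶜ] 0) {g : Lp E p μ}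
    (hg : g ∈ (Submodule.span 𝕜 (range f)).topologicalClosure) (hg0 : g ≠ 0) :
    ∃ n, ∀ r, MemLp g r μ → MemLp (f n) r μ := by
  obtain ⟨n, hn⟩ : ∃ n, ¬ g =ᵐ[μ.restrict (U n)] 0 := by
    by_contra! h
    exact hg0 <| (Lp.eq_zero_iff_ae_eq_zero).2 <| ae_of_ae_restrict_of_ae_restrict_compl _
      ((ae_restrict_iUnion_iff U _).2 h) (ae_eq_zero_on_compl_iUnion_of_mem_closure_span hf hg)
  obtain ⟨c, hc⟩ := exists_ae_eq_smul_of_mem_closure_span (𝕜 := 𝕜) hU hf hg n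
  have hc0 : c ≠ 0 := by
    rintro rfl
    exact hn (by simpa using hc)
  refine ⟨n, fun r hgr => ?_⟩
  have hfr : MemLp (f n) r (μ.restrict (U n)) := by
    simpa [smul_smul, hc0] using ((hgr.restrict (U n)).ae_eq hc).const_smul c⁻¹
  exact ((memLp_indicator_iff_restrict (hUm n)).2 hfr).ae_eq
    (indicator_ae_eq_of_restrict_compl_ae_eq_zero (hUm n) (hf n))

end DisjointSupports

end MeasureTheory

section StepFunction

variable {α M : Type*} [AddCommMonoid M] [TopologicalSpace M]

noncomputable def stepFun (A : ℕ → Set α) (c : ℕ → M) (x : α) : M :=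
  ∑' k, (A k).indicator (fun _ => c k) x

variable {A : ℕ → Set α} {c : ℕ → M} {x : α}

theorem stepFun_apply_of_mem (hA : Pairwise (Disjoint on A)) {k : ℕ} (hx : x ∈ A k) :
    stepFun A c x = c k := by
  rw [stepFun, tsum_eq_single k fun j hj => indicator_of_notMem
    (fun hxj => (hA hj).ne_of_mem hxj hx rfl) _, indicator_of_mem hx]

theorem stepFun_apply_of_notMem (hx : x ∉ ⋃ k, A k) : stepFun A c x = 0 := by
  simp only [mem_iUnion, not_exists] at hx
  simp [stepFun, indicator_of_notMem (hx _)]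

theorem comp_stepFun {N : Type*} [AddCommMonoid N] [TopologicalSpace N]
    (hA : Pairwise (Disjoint on A)) {φ : M → N} (hφ : φ 0 = 0) (x : α) :
    φ (stepFun A c x) = stepFun A (fun k => φ (c k)) x := by
  by_cases hx : x ∈ ⋃ k, A k
  · obtain ⟨k, hk⟩ := mem_iUnion.1 hx
    rw [stepFun_apply_of_mem hA hk, stepFun_apply_of_mem hA hk]
  · rw [stepFun_apply_of_notMem hx, stepFun_apply_of_notMem hx, hφ]

theorem hasSum_stepFun (hA : Pairwise (Disjoint on A)) (x : α) :
    HasSum (fun k => (A k).indicator (fun _ => c k) x) (stepFun A c x) := by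
  refine (summable_of_hasFiniteSupport ?_).hasSum
  refine Subsingleton.finite fun j hj k hk => ?_
  by_contra hjk
  exact (hA hjk).ne_of_mem (mem_of_indicator_ne_zero hj) (mem_of_indicator_ne_zero hk) rfl

theorem stronglyMeasurable_stepFun [MeasurableSpace α] [ContinuousAdd M]
    [TopologicalSpace.PseudoMetrizableSpace M] (hA : Pairwise (Disjoint on A))
    (hAm : ∀ k, MeasurableSet (A k)) : StronglyMeasurable (stepFun A c) :=
  stronglyMeasurable_of_tendsto _
    (fun _ => Finset.stronglyMeasurable_fun_sum _ fun k _ =>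
      stronglyMeasurable_const.indicator (hAm k))
    (tendsto_pi_nhds.2 fun x => (hasSum_stepFun hA x).tendsto_sum_nat)

theorem lintegral_stepFun [MeasurableSpace α] (μ : Measure α) (hAm : ∀ k, MeasurableSet (A k))
    (c : ℕ → ℝ≥0∞) : ∫⁻ x, stepFun A c x ∂μ = ∑' k, c k * μ (A k) := by
  unfold stepFun
  rw [lintegral_tsum fun k => (measurable_const.indicator (hAm k)).aemeasurable]
  simp_rw [lintegral_indicator_const (hAm _)]

theorem memLp_stepFun_iff {E : Type*} [NormedAddCommGroup E] [MeasurableSpace α] {μ : Measure α}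
    {c : ℕ → E} (hA : Pairwise (Disjoint on A)) (hAm : ∀ k, MeasurableSet (A k)) {r : ℝ}
    (hr : 0 < r) :
    MemLp (stepFun A c) (ENNReal.ofReal r) μ ↔ ∑' k, ‖c k‖ₑ ^ r * μ (A k) < ∞ := by
  have hφ (x : α) : ‖stepFun A c x‖ₑ ^ r = stepFun A (fun k => ‖c k‖ₑ ^ r) x :=
    comp_stepFun hA (φ := fun y : E => ‖y‖ₑ ^ r) (by simp [hr]) x
  simp_rw [MemLp, (stronglyMeasurable_stepFun hA hAm).aestronglyMeasurable, true_and,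
    eLpNorm_lt_top_iff_lintegral_rpow_enorm_lt_top (by simpa using hr) ENNReal.ofReal_ne_top,
    ENNReal.toReal_ofReal hr.le, hφ, lintegral_stepFun μ hAm]

end StepFunction

theorem ENNReal.tsum_eq_top_of_eventually_one_le {a : ℕ → ℝ≥0∞}
    (h : ∀ᶠ k in Filter.atTop, 1 ≤ a k) : ∑' k, a k = ∞ := by
  by_contra hne
  obtain ⟨k, hk1, hk2⟩ := (h.and ((ENNReal.tendsto_atTop_zero_of_tsum_ne_top hne).eventually
    (gt_mem_nhds one_pos))).exists
  exact (hk1.trans_lt hk2).false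

noncomputable section Dyadic

def dyadicIoc (j : ℕ) : Set ℝ := Ioc ((2 : ℝ)⁻¹ ^ (j + 1)) ((2 : ℝ)⁻¹ ^ j)

theorem pairwise_disjoint_dyadicIoc : Pairwise (Disjoint on dyadicIoc) :=
  (pow_right_anti₀ (by norm_num : (0 : ℝ) ≤ 2⁻¹) (by norm_num)).pairwise_disjoint_on_Ioc_succ

theorem dyadicIoc_subset_Icc (j : ℕ) : dyadicIoc j ⊆ Icc 0 1 :=
  Ioc_subset_Icc_self.trans <|
    Icc_subset_Icc (by positivity) (pow_le_one₀ (by norm_num) (by norm_num))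

theorem volume_dyadicIoc (j : ℕ) : volume (dyadicIoc j) = 2 ^ (-((j : ℝ) + 1)) := by
  rw [dyadicIoc, Real.volume_Ioc, pow_succ, show ∀ x : ℝ, x - x * 2⁻¹ = x * 2⁻¹ by intros; ring,
    ← pow_succ, ENNReal.ofReal_pow (by norm_num), ENNReal.rpow_neg, ← ENNReal.inv_rpow,
    ENNReal.ofReal_inv_of_pos two_pos, ENNReal.ofReal_ofNat]
  exact_mod_cast (ENNReal.rpow_natCast _ (j + 1)).symm

theorem enorm_two_rpow_rpow_mul_volume_dyadicIoc {p : ℝ} (hp : p ≠ 0) (r : ℝ) (j k : ℕ) :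
    ‖(2 : ℝ) ^ (((j : ℝ) + 1 - k) / p)‖ₑ ^ r * volume (dyadicIoc j)
      = 2 ^ (((j : ℝ) + 1 - k) * (r / p) - (j + 1)) := by
  rw [volume_dyadicIoc, Real.enorm_eq_ofReal (by positivity),
    ← ENNReal.ofReal_rpow_of_pos two_pos, ENNReal.ofReal_ofNat, ← ENNReal.rpow_mul,
    ← ENNReal.rpow_add _ _ two_ne_zero ENNReal.ofNat_ne_top]
  congr 1
  field_simp
  ring

def singularFun (p : ℝ) (n : ℕ) : ℝ → ℝ :=
  stepFun (fun k => dyadicIoc (Nat.pair n k))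
    fun k => (2 : ℝ) ^ (((Nat.pair n k : ℝ) + 1 - k) / p)

local notation "μ₀" => volume.restrict (Icc (0 : ℝ) 1)

theorem memLp_singularFun_iff {p r : ℝ} (hp : p ≠ 0) (hr : 0 < r) (n : ℕ) :
    MemLp (singularFun p n) (ENNReal.ofReal r) μ₀ ↔
      ∑' k : ℕ, (2 : ℝ≥0∞) ^ (((Nat.pair n k : ℝ) + 1 - k) * (r / p) - (Nat.pair n k + 1))
        < ∞ := by
  rw [singularFun, memLp_stepFun_iff (pairwise_disjoint_dyadicIoc.comp_of_injective
    fun _ _ h => (Nat.pair_eq_pair.1 h).2) (fun _ => measurableSet_Ioc) hr]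
  simp only [Measure.restrict_eq_self _ (dyadicIoc_subset_Icc _),
    enorm_two_rpow_rpow_mul_volume_dyadicIoc hp]

theorem memLp_singularFun {p : ℝ} (hp : 0 < p) (n : ℕ) :
    MemLp (singularFun p n) (ENNReal.ofReal p) μ₀ := by
  rw [memLp_singularFun_iff hp.ne' hp]
  have hk (k : ℕ) : (2 : ℝ≥0∞) ^ (((Nat.pair n k : ℝ) + 1 - k) * (p / p) - (Nat.pair n k + 1))
      = 2⁻¹ ^ k := by
    rw [div_self hp.ne', mul_one, show ∀ a b : ℝ, a + 1 - b - (a + 1) = -b by intros; ring,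
      ENNReal.rpow_neg, ENNReal.rpow_natCast, ENNReal.inv_pow]
  simp only [hk, ENNReal.tsum_geometric, ENNReal.one_sub_inv_two, inv_inv]
  exact ENNReal.ofNat_lt_top

theorem not_memLp_singularFun {p q : ℝ} (hp : 0 < p) (hpq : p < q) (n : ℕ) :
    ¬ MemLp (singularFun p n) (ENNReal.ofReal q) μ₀ := by
  rw [memLp_singularFun_iff hp.ne' (hp.trans hpq), not_lt, top_le_iff]
  set s := q / p
  have hs : 1 < s := (one_lt_div hp).2 hpq
  refine ENNReal.tsum_eq_top_of_eventually_one_le ?_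
  filter_upwards [tendsto_natCast_atTop_atTop.eventually_ge_atTop (s / (s - 1))] with k hk
  rw [div_le_iff₀ (by linarith)] at hk
  have hpair : (k : ℝ) * k ≤ Nat.pair n k := by
    have h := Nat.max_sq_add_min_le_pair n k
    rw [sq] at h
    exact_mod_cast (Nat.mul_self_le_mul_self (le_max_right n k)).trans (by omega)
  refine ENNReal.rpow_zero (x := 2) ▸ ENNReal.rpow_le_rpow_of_exponent_le one_le_two ?_
  nlinarith

def singularSupport (n : ℕ) : Set ℝ := ⋃ k, dyadicIoc (Nat.pair n k)

theorem measurableSet_singularSupport (n : ℕ) : MeasurableSet (singularSupport n) :=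
  MeasurableSet.iUnion fun _ => measurableSet_Ioc

theorem pairwise_disjoint_singularSupport : Pairwise (Disjoint on singularSupport) := by
  intro m n hmn
  refine disjoint_iUnion_left.2 fun k => disjoint_iUnion_right.2 fun l =>
    pairwise_disjoint_dyadicIoc fun h => hmn (Nat.pair_eq_pair.1 h).1

theorem singularFun_ae_eq_zero_on_compl (μ : Measure ℝ) (p : ℝ) (n : ℕ) :
    singularFun p n =ᵐ[μ.restrict (singularSupport n)ᶜ] 0 :=
  ae_restrict_of_forall_mem (measurableSet_singularSupport n).compl fun _ hx =>
    stepFun_apply_of_notMem hx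

def singularLp {p : ℝ} (hp : 0 < p) (n : ℕ) : Lp ℝ (ENNReal.ofReal p) μ₀ :=
  (memLp_singularFun hp n).toLp

theorem singularLp_ae_eq_zero_on_compl {p : ℝ} (hp : 0 < p) (n : ℕ) :
    singularLp hp n =ᵐ[(μ₀).restrict (singularSupport n)ᶜ] 0 :=
  Filter.EventuallyEq.trans (ae_restrict_of_ae (memLp_singularFun hp n).coeFn_toLp)
    (singularFun_ae_eq_zero_on_compl _ p n)

theorem singularLp_ne_zero {p : ℝ} (hp : 0 < p) (n : ℕ) : singularLp hp n ≠ 0 := by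
  intro h
  refine not_memLp_singularFun hp (lt_add_one p) n (MemLp.zero.ae_eq ?_)
  exact ((memLp_singularFun hp n).coeFn_toLp.symm.trans (Lp.eq_zero_iff_ae_eq_zero.1 h)).symm

end Dyadic


/-- For every `1 ≤ p < ∞`, the set `L_p[0,1] \ ⋃_{q>p} L_q[0,1]` is spaceable:
there is an infinite-dimensional closed subspace of `L_p[0,1]` every nonzero element
of which fails to be in `ℒ^q[0,1]` for every `q > p`. -/
theorem spaceable_Lp_setminus_union_Lq (p : ℝ) (hp : 1 ≤ p) :
    letI : Fact (1 ≤ ENNReal.ofReal p) := ⟨ENNReal.one_le_ofReal.mpr hp⟩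
    ∃ Y : Submodule ℝ (Lp ℝ (ENNReal.ofReal p) (volume.restrict (Set.Icc (0:ℝ) 1))),
      IsClosed (Y : Set (Lp ℝ (ENNReal.ofReal p) (volume.restrict (Set.Icc (0:ℝ) 1)))) ∧
      ¬ Module.Finite ℝ Y ∧
      ∀ g ∈ Y, g ≠ 0 → ∀ q : ℝ, p < q →
        ¬ MemLp (g : ℝ → ℝ) (ENNReal.ofReal q) (volume.restrict (Set.Icc (0:ℝ) 1)) := by
  have : Fact (1 ≤ ENNReal.ofReal p) := ⟨ENNReal.one_le_ofReal.mpr hp⟩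
  have hp0 : 0 < p := one_pos.trans_le hp
  have hsupp := singularLp_ae_eq_zero_on_compl hp0
  refine ⟨(Submodule.span ℝ (range (singularLp hp0))).topologicalClosure,
    Submodule.isClosed_topologicalClosure _, ?_, fun g hg hg0 q hpq hgq => ?_⟩
  · exact Submodule.not_finite_of_linearIndependent
      (linearIndependent_of_disjoint_supports pairwise_disjoint_singularSupport hsupp
        (singularLp_ne_zero hp0))
      fun n => Submodule.le_topologicalClosure _ (Submodule.subset_span (mem_range_self n))
  · obtain ⟨n, hn⟩ := exists_memLp_of_memLp_of_mem_closure_span measurableSet_singularSupport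
      pairwise_disjoint_singularSupport hsupp hg hg0
    exact not_memLp_singularFun hp0 hpq n ((hn _ hgq).ae_eq (memLp_singularFun hp0 n).coeFn_toLp)
end

section
/- Let 0 < p < ∞ and let f : ℝ → ℝ satisfy f ∈ ℒ^p([0,1]) and f ∉ ℒ^q([0,1]) for every real q > p. With I_n = [1 - 2^{1-n}, 1 - 2^{-n}) and f_n(x) = f(2^n (x - (1 - 2^{1-n}))) for x ∈ I_n, f_n(x) = 0 otherwise: (i) the family (f_n)_{n≥1} is linearly independent in the space of a.e.-equivalence classes of measurable functions on [0,1]; (ii) for every finitely supported family of reals (α_n) not all zero, the function ∑_n α_n f_n belongs to ℒ^p([0,1]) but does not belong to ℒ^q([0,1]) for any q > p. -/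
/-!
On `I_n` every finite combination `∑ α_m f_m` coincides with `α_n f_n`, and the affine change
of variables `I_n → [0, 1)` only rescales Lebesgue measure, so `f_n` restricted to `I_n` lies in
exactly the same `ℒ^r` spaces as `f` on `[0, 1]`. Hence a combination vanishing a.e. with
`α_n ≠ 0` would make `f` vanish a.e. and so lie in every `ℒ^q`, and a combination in `ℒ^q` with
`α_n ≠ 0` would put `f` in `ℒ^q`.
-/

open MeasureTheory Set Function
open scoped ENNReal

section DisjointSupports

variable {X ι : Type*} {I : ι → Set X}

lemma sum_mul_eq_of_mem_of_pairwise_disjoint {R : Type*} [Semiring R] {F : ι → X → R}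
    (hI : Pairwise (Disjoint on I)) (hF : ∀ n, support (F n) ⊆ I n) (α : ι →₀ R)
    {n : ι} {x : X} (hx : x ∈ I n) :
    ∑ m ∈ α.support, α m * F m x = α n * F n x := by
  refine Finset.sum_eq_single n (fun m _ hmn => ?_) (fun hn => ?_)
  · have hxm : x ∉ I m := disjoint_right.1 (hI hmn) hx
    rw [notMem_support.1 fun h => hxm (hF m h), mul_zero]
  · rw [Finsupp.notMem_support_iff.1 hn, zero_mul]

variable [MeasurableSpace X] {μ : Measure X}

lemma sum_mul_ae_eq_restrict_of_pairwise_disjoint {R : Type*} [Semiring R] {F : ι → X → R}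
    (hI : Pairwise (Disjoint on I)) (hF : ∀ n, support (F n) ⊆ I n) (α : ι →₀ R)
    {n : ι} (hIn : MeasurableSet (I n)) :
    (fun x => ∑ m ∈ α.support, α m * F m x) =ᵐ[μ.restrict (I n)] fun x => α n * F n x :=
  ae_restrict_of_forall_mem hIn fun _ hx => sum_mul_eq_of_mem_of_pairwise_disjoint hI hF α hx

theorem eq_zero_of_sum_mul_ae_eq_zero_of_pairwise_disjoint {R : Type*} [Semiring R]
    [NoZeroDivisors R] {F : ι → X → R} (hI : Pairwise (Disjoint on I))
    (hIm : ∀ n, MeasurableSet (I n)) (hF : ∀ n, support (F n) ⊆ I n)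
    (hF0 : ∀ n, ¬ F n =ᵐ[μ.restrict (I n)] 0) (α : ι →₀ R)
    (h : (fun x => ∑ n ∈ α.support, α n * F n x) =ᵐ[μ] fun _ => 0) : α = 0 := by
  ext n
  by_contra hn
  refine hF0 n ?_
  filter_upwards [ae_restrict_of_ae h,
    sum_mul_ae_eq_restrict_of_pairwise_disjoint hI hF α (hIm n)] with x hzero hsum
  exact (mul_eq_zero.1 (hsum.symm.trans hzero)).resolve_left hn

theorem not_memLp_sum_mul_of_pairwise_disjoint {𝕜 : Type*} [NormedField 𝕜] {F : ι → X → 𝕜}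
    (hI : Pairwise (Disjoint on I)) (hIm : ∀ n, MeasurableSet (I n))
    (hF : ∀ n, support (F n) ⊆ I n) {q : ℝ≥0∞}
    (hq : ∀ n, ¬ MemLp (F n) q (μ.restrict (I n))) {α : ι →₀ 𝕜} (hα : α ≠ 0) :
    ¬ MemLp (fun x => ∑ n ∈ α.support, α n * F n x) q μ := by
  intro h
  obtain ⟨n, hn⟩ := Finsupp.support_nonempty_iff.2 hα
  have hterm : MemLp (fun x => α n * F n x) q (μ.restrict (I n)) :=
    (h.restrict (I n)).ae_eq (sum_mul_ae_eq_restrict_of_pairwise_disjoint hI hF α (hIm n))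
  refine hq n ?_
  simpa only [inv_mul_cancel_left₀ (Finsupp.mem_support_iff.1 hn)] using hterm.const_mul (α n)⁻¹

end DisjointSupports

section AffineChangeOfVariables

lemma memLp_smul_measure_iff {X E : Type*} [MeasurableSpace X] [NormedAddCommGroup E]
    {μ : Measure X} {f : X → E} {p c : ℝ≥0∞} (hc0 : c ≠ 0) (hc : c ≠ ∞) :
    MemLp f p (c • μ) ↔ MemLp f p μ := by
  refine ⟨fun h => ?_, fun h => h.smul_measure hc⟩
  simpa only [smul_smul, ENNReal.inv_mul_cancel hc0 hc, one_smul]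
    using h.smul_measure (ENNReal.inv_ne_top.2 hc0)

lemma measurableEmbedding_mul_sub {c : ℝ} (hc : c ≠ 0) (a : ℝ) :
    MeasurableEmbedding fun x => c * (x - a) :=
  ((Homeomorph.subRight a).trans (Homeomorph.mulLeft₀ c hc)).measurableEmbedding

lemma map_mul_sub_volume {c : ℝ} (hc : c ≠ 0) (a : ℝ) :
    volume.map (fun x => c * (x - a)) = ENNReal.ofReal |c⁻¹| • volume := by
  calc volume.map (fun x => c * (x - a))
      = (volume.map (· - a)).map (c * ·) :=
        (Measure.map_map (measurable_const_mul c) (measurable_sub_const a)).symm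
    _ = ENNReal.ofReal |c⁻¹| • volume := by
        rw [(measurePreserving_sub_right volume a).map_eq, Real.map_volume_mul_left hc]

lemma map_mul_sub_restrict_preimage {c : ℝ} (hc : c ≠ 0) (a : ℝ) (s : Set ℝ) :
    (volume.restrict ((fun x => c * (x - a)) ⁻¹' s)).map (fun x => c * (x - a)) =
      ENNReal.ofReal |c⁻¹| • volume.restrict s := by
  rw [← (measurableEmbedding_mul_sub hc a).restrict_map, map_mul_sub_volume hc,
    Measure.restrict_smul]

lemma memLp_comp_mul_sub_iff {E : Type*} [NormedAddCommGroup E] {g : ℝ → E} {c : ℝ} (hc : c ≠ 0)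
    (a : ℝ) (s : Set ℝ) (r : ℝ≥0∞) :
    MemLp (fun x => g (c * (x - a))) r (volume.restrict ((fun x => c * (x - a)) ⁻¹' s)) ↔
      MemLp g r (volume.restrict s) := by
  rw [← memLp_smul_measure_iff (f := g) (μ := volume.restrict s) (c := ENNReal.ofReal |c⁻¹|)
    (by simpa using hc) ENNReal.ofReal_ne_top, ← map_mul_sub_restrict_preimage hc]
  exact (measurableEmbedding_mul_sub hc a).memLp_map_measure_iff.symm

lemma preimage_mul_sub_Ico_zero_one {c : ℝ} (hc : 0 < c) (a : ℝ) :
    (fun x => c * (x - a)) ⁻¹' Ico 0 1 = Ico a (a + c⁻¹) := by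
  ext x
  simp only [mem_preimage, mem_Ico, mul_nonneg_iff_of_pos_left hc, sub_nonneg]
  rw [← lt_div_iff₀' hc, one_div, sub_lt_iff_lt_add']

end AffineChangeOfVariables

section RescaledCopies

def dyadicIco (n : ℕ) : Set ℝ := Ico (1 - 2 / 2 ^ (n + 1)) (1 - 1 / 2 ^ (n + 1))

lemma measurableSet_dyadicIco (n : ℕ) : MeasurableSet (dyadicIco n) := measurableSet_Ico

lemma dyadicIco_subset_Icc (n : ℕ) : dyadicIco n ⊆ Icc 0 1 := by
  have h2 : (2 : ℝ) ≤ 2 ^ (n + 1) := le_self_pow₀ one_le_two (by omega)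
  have : 2 / (2 : ℝ) ^ (n + 1) ≤ 1 := (div_le_one (by positivity)).2 h2
  exact Ico_subset_Icc_self.trans (Icc_subset_Icc (by linarith) (by simp))

lemma pairwise_disjoint_dyadicIco : Pairwise (Disjoint on dyadicIco) := by
  have hsucc (n : ℕ) : (1 : ℝ) - 2 / 2 ^ (n + 1 + 1) = 1 - 1 / 2 ^ (n + 1) := by
    rw [pow_succ]; field_simp
  have hmono : Monotone fun n : ℕ => (1 : ℝ) - 2 / 2 ^ (n + 1) :=
    monotone_nat_of_le_succ fun n => by
      gcongr
      · norm_num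
      · omega
  convert hmono.pairwise_disjoint_on_Ico_succ using 3 with n
  simp only [dyadicIco, Order.succ_eq_add_one, hsucc]

lemma dyadicIco_eq_preimage (n : ℕ) :
    dyadicIco n = (fun x => 2 ^ (n + 1) * (x - (1 - 2 / 2 ^ (n + 1)))) ⁻¹' Ico 0 1 := by
  rw [preimage_mul_sub_Ico_zero_one (by positivity), dyadicIco]
  congr 1
  field_simp
  ring

variable {E : Type*} [NormedAddCommGroup E]

/-- The paper's `f_{n+1}`: the copy of `f` on `[0, 1)` rescaled onto `dyadicIco n = I_{n+1}`. -/
noncomputable def rescaledCopy (f : ℝ → E) (n : ℕ) : ℝ → E :=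
  (dyadicIco n).indicator fun x => f (2 ^ (n + 1) * (x - (1 - 2 / 2 ^ (n + 1))))

lemma support_rescaledCopy_subset (f : ℝ → E) (n : ℕ) :
    support (rescaledCopy f n) ⊆ dyadicIco n :=
  support_indicator_subset

lemma memLp_rescaledCopy_restrict_iff (f : ℝ → E) (n : ℕ) (r : ℝ≥0∞) :
    MemLp (rescaledCopy f n) r (volume.restrict (dyadicIco n)) ↔
      MemLp f r (volume.restrict (Icc 0 1)) := by
  rw [rescaledCopy, memLp_congr_ae (indicator_ae_eq_restrict (measurableSet_dyadicIco n)),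
    dyadicIco_eq_preimage, memLp_comp_mul_sub_iff (by positivity),
    Measure.restrict_congr_set Ico_ae_eq_Icc]

lemma memLp_rescaledCopy {f : ℝ → E} {r : ℝ≥0∞} (hf : MemLp f r (volume.restrict (Icc 0 1)))
    (n : ℕ) : MemLp (rescaledCopy f n) r (volume.restrict (Icc 0 1)) := by
  rw [← indicator_eq_self.2 (support_rescaledCopy_subset f n),
    memLp_indicator_iff_restrict (measurableSet_dyadicIco n),
    Measure.restrict_restrict_of_subset (dyadicIco_subset_Icc n), memLp_rescaledCopy_restrict_iff]
  exact hf

end RescaledCopies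

theorem rescaled_family_linearIndependent_and_combos_general (p : ℝ)
    (f : ℝ → ℝ)
    (hfp : MemLp f (ENNReal.ofReal p) (volume.restrict (Set.Icc (0:ℝ) 1)))
    (hfq : ∀ q : ℝ, p < q →
      ¬ MemLp f (ENNReal.ofReal q) (volume.restrict (Set.Icc (0:ℝ) 1))) :
    let fn : ℕ → ℝ → ℝ := fun n x =>
      if x ∈ Set.Ico (1 - 2/2^(n+1) : ℝ) (1 - 1/2^(n+1))
        then f (2^(n+1) * (x - (1 - 2/2^(n+1)))) else 0
    (∀ α : ℕ →₀ ℝ,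
      (fun x => ∑ n ∈ α.support, α n * fn n x)
        =ᵐ[volume.restrict (Set.Icc (0:ℝ) 1)] (fun _ => (0:ℝ)) → α = 0) ∧
    (∀ α : ℕ →₀ ℝ, α ≠ 0 →
      MemLp (fun x => ∑ n ∈ α.support, α n * fn n x) (ENNReal.ofReal p)
        (volume.restrict (Set.Icc (0:ℝ) 1)) ∧
      ∀ q : ℝ, p < q →
        ¬ MemLp (fun x => ∑ n ∈ α.support, α n * fn n x) (ENNReal.ofReal q)
          (volume.restrict (Set.Icc (0:ℝ) 1))) := by
  intro fn
  have hfn : fn = rescaledCopy f := by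
    ext n x
    simp only [fn, rescaledCopy, indicator_apply, dyadicIco]
  rw [hfn]
  have hnotLp (n : ℕ) (q : ℝ) (hq : p < q) : ¬ MemLp (rescaledCopy f n) (ENNReal.ofReal q)
      ((volume.restrict (Icc 0 1)).restrict (dyadicIco n)) := by
    rw [Measure.restrict_restrict_of_subset (dyadicIco_subset_Icc n),
      memLp_rescaledCopy_restrict_iff]
    exact hfq q hq
  have hmeas := measurableSet_dyadicIco
  have hsupp := support_rescaledCopy_subset f
  refine ⟨fun α h => ?_, fun α hα => ⟨?_, fun q hq => ?_⟩⟩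
  · refine eq_zero_of_sum_mul_ae_eq_zero_of_pairwise_disjoint pairwise_disjoint_dyadicIco hmeas
      hsupp (fun n hzero => ?_) α h
    exact hnotLp n (p + 1) (by linarith) ((memLp_congr_ae hzero).2 .zero)
  · exact memLp_finsetSum _ fun n _ => (memLp_rescaledCopy hfp n).const_mul (α n)
  · exact not_memLp_sum_mul_of_pairwise_disjoint pairwise_disjoint_dyadicIco hmeas hsupp
      (hnotLp · q hq) hα

/-- If `f ∈ ℒ^p[0,1]` but `f ∉ ℒ^q[0,1]` for all `q > p`, then the rescaled copies
`f_n` of `f` on the intervals `I_n = [1-2^{1-n}, 1-2^{-n})`, `n ≥ 1`, are linearly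
independent as a.e.-equivalence classes, and every nontrivial finite linear combination
lies in `ℒ^p[0,1]` but in no `ℒ^q[0,1]` with `q > p`. -/
theorem rescaled_family_linearIndependent_and_combos (p : ℝ) (hp : 0 < p)
    (f : ℝ → ℝ) (hf : Measurable f)
    (hfp : MemLp f (ENNReal.ofReal p) (volume.restrict (Set.Icc (0:ℝ) 1)))
    (hfq : ∀ q : ℝ, p < q →
      ¬ MemLp f (ENNReal.ofReal q) (volume.restrict (Set.Icc (0:ℝ) 1))) :
    let fn : ℕ → ℝ → ℝ := fun n x =>
      if x ∈ Set.Ico (1 - 2/2^(n+1) : ℝ) (1 - 1/2^(n+1))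
        then f (2^(n+1) * (x - (1 - 2/2^(n+1)))) else 0
    (∀ α : ℕ →₀ ℝ,
      (fun x => ∑ n ∈ α.support, α n * fn n x)
        =ᵐ[volume.restrict (Set.Icc (0:ℝ) 1)] (fun _ => (0:ℝ)) → α = 0) ∧
    (∀ α : ℕ →₀ ℝ, α ≠ 0 →
      MemLp (fun x => ∑ n ∈ α.support, α n * fn n x) (ENNReal.ofReal p)
        (volume.restrict (Set.Icc (0:ℝ) 1)) ∧
      ∀ q : ℝ, p < q →
        ¬ MemLp (fun x => ∑ n ∈ α.support, α n * fn n x) (ENNReal.ofReal q)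
          (volume.restrict (Set.Icc (0:ℝ) 1))) :=
  rescaled_family_linearIndependent_and_combos_general p f hfp hfq
end
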